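/- Let K be an algebraically closed field of characteristic 0, let d ≥ 5, and let F ∈ K[X,Y,Z] be a nonsingular homogeneous polynomial of degree d. If Aut(F) contains an element of order ℓ·d for some integer ℓ with 2 ≤ ℓ ≤ d−1, then ℓ divides d−1 or ℓ divides d−2. -/

import Mathlib

open MvPolynomial Matrix

noncomputable section

variable {K : Type*} [Field K]

/-- The substitution `F ∘ A`, i.e. `X i ↦ ∑ j, A i j • X j`. -/
def substPoly (A : Matrix (Fin 3) (Fin 3) K) (F : MvPolynomial (Fin 3) K) :
    MvPolynomial (Fin 3) K :=
  aeval (fun i => ∑ j, A i j • X j) F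

lemma substPoly_one (F : MvPolynomial (Fin 3) K) : substPoly 1 F = F := by
  have h : (fun i => ∑ j, (1 : Matrix (Fin 3) (Fin 3) K) i j • X j)
      = (X : Fin 3 → MvPolynomial (Fin 3) K) := by
    funext i
    simp [Matrix.one_apply, ite_smul]
  rw [substPoly, h]
  exact aeval_X_left_apply F

lemma substPoly_smul (A : Matrix (Fin 3) (Fin 3) K) (c : K) (F : MvPolynomial (Fin 3) K) :
    substPoly A (c • F) = c • substPoly A F := by
  unfold substPoly
  exact _root_.map_smul (aeval fun i => ∑ j, A i j • X j) c F

lemma substPoly_mul (A B : Matrix (Fin 3) (Fin 3) K) (F : MvPolynomial (Fin 3) K) :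
    substPoly (A * B) F = substPoly B (substPoly A F) := by
  have hfun : (fun i => ∑ j, (A * B) i j • (X j : MvPolynomial (Fin 3) K))
      = fun i => (aeval fun i => (∑ j, B i j • X j : MvPolynomial (Fin 3) K))
          (∑ j, A i j • X j : MvPolynomial (Fin 3) K) := by
    funext i
    rw [map_sum]
    simp only [_root_.map_smul, aeval_X, Matrix.mul_apply, Finset.sum_smul, Finset.smul_sum, smul_smul]
    exact Finset.sum_comm
  have h1 : substPoly (A * B) F
      = aeval (fun i => (aeval fun i => (∑ j, B i j • X j : MvPolynomial (Fin 3) K))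
          (∑ j, A i j • X j : MvPolynomial (Fin 3) K)) F := by
    unfold substPoly
    exact congrArg
      (fun f => (aeval f : MvPolynomial (Fin 3) K →ₐ[K] MvPolynomial (Fin 3) K) F) hfun
  rw [h1, ← MvPolynomial.comp_aeval]
  rfl

/-- The subgroup of `GL₃(K)` preserving the polynomial `F` up to scalar. -/
def autGL (F : MvPolynomial (Fin 3) K) : Subgroup (GL (Fin 3) K) where
  carrier := {A | ∃ c : Kˣ, substPoly (A : Matrix (Fin 3) (Fin 3) K) F = (c : K) • F}
  one_mem' := ⟨1, by simp [substPoly_one]⟩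
  mul_mem' := by
    rintro A B ⟨c, hc⟩ ⟨e, he⟩
    refine ⟨c * e, ?_⟩
    have hAB : ((A * B : GL (Fin 3) K) : Matrix (Fin 3) (Fin 3) K)
        = (A : Matrix (Fin 3) (Fin 3) K) * (B : Matrix (Fin 3) (Fin 3) K) := rfl
    rw [hAB, substPoly_mul, hc, substPoly_smul, he, smul_smul, ← Units.val_mul]
  inv_mem' := by
    rintro A ⟨c, hc⟩
    refine ⟨c⁻¹, ?_⟩
    have key : (c : K) • substPoly ((A⁻¹ : GL (Fin 3) K) : Matrix (Fin 3) (Fin 3) K) F = F := by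
      rw [← substPoly_smul, ← hc, ← substPoly_mul]
      have h1 : (A : Matrix (Fin 3) (Fin 3) K) *
          ((A⁻¹ : GL (Fin 3) K) : Matrix (Fin 3) (Fin 3) K) = 1 := by
        exact_mod_cast Units.mul_inv A
      rw [h1, substPoly_one]
    calc substPoly ((A⁻¹ : GL (Fin 3) K) : Matrix (Fin 3) (Fin 3) K) F
        = ((c : K)⁻¹ * (c : K)) •
            substPoly ((A⁻¹ : GL (Fin 3) K) : Matrix (Fin 3) (Fin 3) K) F := by
          rw [inv_mul_cancel₀ (Units.ne_zero c), one_smul]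
      _ = (c : K)⁻¹ • ((c : K) •
            substPoly ((A⁻¹ : GL (Fin 3) K) : Matrix (Fin 3) (Fin 3) K) F) := by
          rw [smul_smul]
      _ = (c : K)⁻¹ • F := by rw [key]
      _ = ((c⁻¹ : Kˣ) : K) • F := by rw [Units.val_inv_eq_inv_val]

/-- `PGL₃(K)`: the quotient of `GL₃(K)` by its center (the scalar matrices). -/
abbrev PGL3 (K : Type*) [Field K] := GL (Fin 3) K ⧸ Subgroup.center (GL (Fin 3) K)

/-- The automorphism group of the plane curve `F = 0`, as a subgroup of `PGL₃(K)`: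
the classes of matrices `A` with `F ∘ A = λ • F` for some `λ ∈ Kˣ`. -/
def projAut (F : MvPolynomial (Fin 3) K) : Subgroup (PGL3 K) :=
  (autGL F).map (QuotientGroup.mk' (Subgroup.center (GL (Fin 3) K)))

/-- `F` is nonsingular: the only common zero of its partial derivatives is the origin. -/
def IsNonsingular (F : MvPolynomial (Fin 3) K) : Prop :=
  ∀ x : Fin 3 → K, (∀ i, eval x (pderiv i F) = 0) → x = 0

/-- `F` and `G` are projectively equivalent: `F ∘ A = λ • G` for some `A ∈ GL₃(K)`, `λ ∈ Kˣ`. -/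
def ProjEquiv (F G : MvPolynomial (Fin 3) K) : Prop :=
  ∃ A : GL (Fin 3) K, ∃ c : Kˣ,
    substPoly (A : Matrix (Fin 3) (Fin 3) K) F = (c : K) • G

/-!
Lift an automorphism of order `n = ℓ d` to `A ∈ GL₃(K)` with `F ∘ A = c F`. Since `Aⁿ` is scalar
and `n ≠ 0` in `K`, `A` is diagonalisable, say `A b_t = ν_t b_t`. At the eigenvector `b_t` the
chain rule and homogeneity give `ν_t ^ (d-1) • (∇F(b_t) ᵥ* A) = c • ∇F(b_t)`, and `∇F(b_t) ≠ 0`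
because `F` is nonsingular; pairing with the eigenbasis produces an index `f t` with
`ν_t ^ (d-1) * ν_(f t) = c`. Written additively in `Kˣ` these are three relations
`(d-1) x_t + x_(f t) = L`, and the order of `[A]` says that `m` kills all differences `x_i - x_j`
only if `ℓ d ∣ m`. For each of the seven shapes of a self-map `f` of a three-element set, the
differences are killed by one of `d`, `d-1`, `(d-1)²`, `(d-1)(d-2)`, `d²-3d+3`, none of which
`ℓ d` divides, or by `d(d-1)` or `d(d-2)`, which gives `ℓ ∣ d-1` or `ℓ ∣ d-2`.
-/

theorem MvPolynomial.pderiv_aeval {σ τ R : Type*} [CommRing R] [Fintype σ] [DecidableEq σ]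
    (g : σ → MvPolynomial τ R) (i : τ) (F : MvPolynomial σ R) :
    pderiv i (aeval g F) = ∑ j, pderiv i (g j) * aeval g (pderiv j F) := by
  induction F using MvPolynomial.induction_on with
  | C a => simp
  | add p q hp hq => simp only [map_add, hp, hq, mul_add, Finset.sum_add_distrib]
  | mul_X p s hp =>
    simp only [map_mul, aeval_X, Derivation.leibniz, hp, smul_eq_mul, map_add, pderiv_X,
      Pi.single_apply, apply_ite (aeval g), map_zero, mul_ite, mul_zero, mul_one,
      Finset.sum_ite_eq, Finset.mem_univ, if_true, mul_add, Finset.sum_add_distrib, Finset.mul_sum]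
    ring_nf

theorem MvPolynomial.IsHomogeneous.eval_smul {σ R : Type*} [CommRing R] [Fintype σ]
    {F : MvPolynomial σ R} {n : ℕ} (hF : F.IsHomogeneous n) (s : R) (x : σ → R) :
    eval (s • x) F = s ^ n * eval x F := by
  rw [eval_eq', eval_eq', Finset.mul_sum]
  refine Finset.sum_congr rfl fun m hm => ?_
  have hdeg : ∑ i, m i = n := by
    simpa [Finsupp.weight_apply, Finsupp.sum_fintype] using hF (mem_support_iff.mp hm)
  simp only [Pi.smul_apply, smul_eq_mul, mul_pow, Finset.prod_mul_distrib,
    Finset.prod_pow_eq_pow_sum, hdeg]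
  ring

def gradAt {σ : Type*} (F : MvPolynomial σ K) (x : σ → K) : σ → K :=
  fun i => eval x (pderiv i F)

theorem gradAt_smul_left {σ : Type*} (c : K) (F : MvPolynomial σ K) (x : σ → K) :
    gradAt (c • F) x = c • gradAt F x := by
  ext i
  simp [gradAt]

theorem MvPolynomial.IsHomogeneous.gradAt_smul {σ : Type*} [Fintype σ] {F : MvPolynomial σ K}
    {n : ℕ} (hF : F.IsHomogeneous n) (s : K) (x : σ → K) :
    gradAt F (s • x) = s ^ (n - 1) • gradAt F x := by
  ext i
  exact hF.pderiv.eval_smul s x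

theorem isNonsingular_iff_gradAt {F : MvPolynomial (Fin 3) K} :
    IsNonsingular F ↔ ∀ x, gradAt F x = 0 → x = 0 := by
  simp only [IsNonsingular, funext_iff, gradAt, Pi.zero_apply]

theorem eval_substPoly (A : Matrix (Fin 3) (Fin 3) K) (F : MvPolynomial (Fin 3) K)
    (x : Fin 3 → K) : eval x (substPoly A F) = eval (A *ᵥ x) F := by
  refine (eval₂Hom_bind₁ (RingHom.id K) x (fun i => ∑ j, A i j • X j) F).trans
    (congrArg (fun y => eval y F) ?_)
  ext i
  simp [mulVec, dotProduct]

theorem gradAt_substPoly (A : Matrix (Fin 3) (Fin 3) K) (F : MvPolynomial (Fin 3) K)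
    (x : Fin 3 → K) : gradAt (substPoly A F) x = gradAt F (A *ᵥ x) ᵥ* A := by
  ext i
  simp only [gradAt, substPoly, pderiv_aeval, map_sum, map_mul, vecMul, dotProduct]
  refine Finset.sum_congr rfl fun j _ => ?_
  rw [mul_comm, ← substPoly, eval_substPoly]
  congr 1
  simp [Pi.single_apply, apply_ite (eval x)]

theorem Module.End.IsSemisimple.exists_basis_eigenvectors [IsAlgClosed K] {ι V : Type*}
    [AddCommGroup V] [Module K V] [FiniteDimensional K V] {f : Module.End K V}
    (hf : f.IsSemisimple) (b₀ : Module.Basis ι K V) :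
    ∃ (b : Module.Basis ι K V) (ν : ι → K), ∀ j, f (b j) = ν j • b j := by
  classical
  have hint : DirectSum.IsInternal f.eigenspace :=
    (DirectSum.isInternal_submodule_iff_iSupIndep_and_iSup_eq_top _).mpr
      ⟨f.eigenspaces_iSupIndep, hf.iSup_eigenspace_eq_top⟩
  let b := hint.collectedBasis fun μ => Module.Basis.ofVectorSpace K (f.eigenspace μ)
  let e := b.indexEquiv b₀
  refine ⟨b.reindex e, fun j => (e.symm j).1, fun j => ?_⟩
  rw [Module.Basis.reindex_apply]
  exact Module.End.mem_eigenspace_iff.mp (hint.collectedBasis_mem _ _)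

theorem Matrix.exists_basis_mulVec_eq_smul_of_pow_eq_scalar [IsAlgClosed K] {ι : Type*}
    [Fintype ι] [DecidableEq ι] {A : Matrix ι ι K} {n : ℕ} {c : K} (hn : (n : K) ≠ 0)
    (hc : c ≠ 0) (hA : A ^ n = scalar ι c) :
    ∃ (b : Module.Basis ι K (ι → K)) (ν : ι → K), ∀ j, A *ᵥ b j = ν j • b j := by
  have hroot : Polynomial.aeval (toLinAlgEquiv' A) (Polynomial.X ^ n - Polynomial.C c) = 0 := by
    have hscalar : scalar ι c = algebraMap K (Matrix ι ι K) c := rfl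
    rw [Polynomial.aeval_algHom_apply, map_sub, Polynomial.aeval_X_pow, Polynomial.aeval_C, hA,
      hscalar, sub_self, map_zero]
  have hss := Module.End.isSemisimple_of_squarefree_aeval_eq_zero
    (Polynomial.separable_X_pow_sub_C c hn hc).squarefree hroot
  exact hss.exists_basis_eigenvectors (Pi.basisFun K ι)

theorem Matrix.pow_mulVec_eq_smul {ι : Type*} [Fintype ι] [DecidableEq ι] {A : Matrix ι ι K}
    {v : ι → K} {μ : K} (h : A *ᵥ v = μ • v) (m : ℕ) : (A ^ m) *ᵥ v = μ ^ m • v := by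
  induction m with
  | zero => simp
  | succ m ih => rw [pow_succ', ← mulVec_mulVec, ih, mulVec_smul, h, smul_smul, ← pow_succ]

theorem exists_pow_eq_scalar_of_mk_pow_eq_one {ι : Type*} [Fintype ι] [DecidableEq ι]
    {A : GL ι K} {n : ℕ} (h : QuotientGroup.mk' (Subgroup.center (GL ι K)) A ^ n = 1) :
    ∃ c : K, c ≠ 0 ∧ (A : Matrix ι ι K) ^ n = scalar ι c := by
  rw [← map_pow, QuotientGroup.mk'_apply, QuotientGroup.eq_one_iff,
    GeneralLinearGroup.center_eq_range_scalar] at h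
  obtain ⟨u, hu⟩ := h
  exact ⟨u, u.ne_zero, by rw [← Units.val_pow_eq_pow_val, ← hu]; rfl⟩

theorem mk_pow_eq_one_of_forall_pow_eq {ι : Type*} [Fintype ι] [DecidableEq ι] {A : GL ι K}
    {b : Module.Basis ι K (ι → K)} {ν : ι → K} (hb : ∀ j, (A : Matrix ι ι K) *ᵥ b j = ν j • b j)
    {m : ℕ} {c : K} (hν : ∀ j, ν j ^ m = c) :
    QuotientGroup.mk' (Subgroup.center (GL ι K)) A ^ m = 1 := by
  rw [← map_pow, QuotientGroup.mk'_apply, QuotientGroup.eq_one_iff,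
    GeneralLinearGroup.mem_center_iff_val_mem_range_scalar]
  refine ⟨c, toLin'.injective (b.ext fun j => ?_)⟩
  rw [toLin'_apply, toLin'_apply, Units.val_pow_eq_pow_val, pow_mulVec_eq_smul (hb j), hν]
  ext
  simp

theorem exists_mul_eq_of_smul_vecMul_eq_smul {ι : Type*} [Fintype ι] [DecidableEq ι]
    {A : Matrix ι ι K} {b : Module.Basis ι K (ι → K)} {ν : ι → K}
    (hb : ∀ j, A *ᵥ b j = ν j • b j) {w : ι → K} (hw : w ≠ 0) {μ c : K}
    (h : μ • (w ᵥ* A) = c • w) : ∃ s, μ * ν s = c := by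
  obtain ⟨s, hs⟩ : ∃ s, w ⬝ᵥ b s ≠ 0 := by
    by_contra! h0
    exact hw ((dotProductEquiv K ι).map_eq_zero_iff.mp (b.ext fun s => by simpa using h0 s))
  refine ⟨s, mul_right_cancel₀ hs ?_⟩
  calc μ * ν s * (w ⬝ᵥ b s) = (μ • (w ᵥ* A)) ⬝ᵥ b s := by
        rw [smul_dotProduct, ← dotProduct_mulVec, hb, dotProduct_smul, smul_eq_mul, smul_eq_mul,
          mul_assoc]
    _ = c * (w ⬝ᵥ b s) := by rw [h, smul_dotProduct, smul_eq_mul]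

theorem exists_pow_mul_eq_of_substPoly_eq_smul {F : MvPolynomial (Fin 3) K} {d : ℕ}
    (hF : F.IsHomogeneous d) (hns : IsNonsingular F) {A : Matrix (Fin 3) (Fin 3) K} {c : K}
    (hA : substPoly A F = c • F) {b : Module.Basis (Fin 3) K (Fin 3 → K)} {ν : Fin 3 → K}
    (hb : ∀ j, A *ᵥ b j = ν j • b j) (t : Fin 3) : ∃ s, ν t ^ (d - 1) * ν s = c := by
  refine exists_mul_eq_of_smul_vecMul_eq_smul hb
    (fun h => b.ne_zero t (isNonsingular_iff_gradAt.mp hns _ h)) ?_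
  calc ν t ^ (d - 1) • (gradAt F (b t) ᵥ* A) = gradAt F (ν t • b t) ᵥ* A := by
        rw [hF.gradAt_smul, smul_vecMul]
    _ = gradAt (substPoly A F) (b t) := by rw [gradAt_substPoly, hb]
    _ = c • gradAt F (b t) := by rw [hA, gradAt_smul_left]

theorem selfMap_fin_three_cases (f : Fin 3 → Fin 3) :
    (∀ t, f t = t) ∨ (∃ s, ∀ t, f t = s) ∨
    ∃ t u v, t ≠ u ∧ t ≠ v ∧ u ≠ v ∧
      ((f t = t ∧ f u = v ∧ f v = u) ∨ (f t = u ∧ f u = v ∧ f v = t) ∨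
        (f t = t ∧ f u = u ∧ f v = t) ∨ (f t = t ∧ f u = t ∧ f v = u) ∨
        (f t = u ∧ f u = t ∧ f v = t)) := by
  revert f
  decide

section Relations

variable {M : Type*} [AddCommGroup M] {d c : ℤ} {x : Fin 3 → M} {L : M} {f : Fin 3 → Fin 3}
  {t u v : Fin 3}

theorem smul_eq_of_distinct (htu : t ≠ u) (htv : t ≠ v) (huv : u ≠ v)
    (hu : c • x u = c • x t) (hv : c • x v = c • x t) (i j : Fin 3) : c • x i = c • x j := by
  have key : ∀ k, c • x k = c • x t := fun k => by
    obtain rfl | rfl | rfl : k = t ∨ k = u ∨ k = v := by omega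
    exacts [rfl, hu, hv]
  rw [key i, key j]

theorem smul_eq_of_forall_map_eq_self (hrel : ∀ t, (d - 1) • x t + x (f t) = L)
    (hf : ∀ t, f t = t) (i j : Fin 3) : d • x i = d • x j := by
  have Ri := hrel i
  have Rj := hrel j
  rw [hf] at Ri Rj
  linear_combination (norm := module) Ri - Rj

theorem smul_eq_of_forall_map_eq (hrel : ∀ t, (d - 1) • x t + x (f t) = L) (s : Fin 3)
    (hf : ∀ t, f t = s) (i j : Fin 3) : (d - 1) • x i = (d - 1) • x j := by
  have Ri := hrel i
  have Rj := hrel j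
  rw [hf] at Ri Rj
  linear_combination (norm := module) Ri - Rj

theorem smul_eq_of_transposition (hrel : ∀ t, (d - 1) • x t + x (f t) = L)
    (htu : t ≠ u) (htv : t ≠ v) (huv : u ≠ v) (ht : f t = t) (hu : f u = v) (hv : f v = u)
    (i j : Fin 3) : ((d - 2) * d) • x i = ((d - 2) * d) • x j := by
  have Rt := hrel t
  have Ru := hrel u
  have Rv := hrel v
  rw [ht] at Rt; rw [hu] at Ru; rw [hv] at Rv
  refine smul_eq_of_distinct htu htv huv ?_ ?_ i j
  · linear_combination (norm := module) (d - 1) • Ru - Rv - (d - 2) • Rt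
  · linear_combination (norm := module) (d - 1) • Rv - Ru - (d - 2) • Rt

theorem smul_eq_of_three_cycle (hrel : ∀ t, (d - 1) • x t + x (f t) = L)
    (htu : t ≠ u) (htv : t ≠ v) (huv : u ≠ v) (ht : f t = u) (hu : f u = v) (hv : f v = t)
    (i j : Fin 3) : (d ^ 2 - 3 * d + 3) • x i = (d ^ 2 - 3 * d + 3) • x j := by
  have Rt := hrel t
  have Ru := hrel u
  have Rv := hrel v
  rw [ht] at Rt; rw [hu] at Ru; rw [hv] at Rv
  refine smul_eq_of_distinct htu htv huv ?_ ?_ i j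
  · linear_combination (norm := module) (d - 1) • Ru - (d - 2) • Rt - Rv
  · linear_combination (norm := module) (d - 2) • Rv + Ru - (d - 1) • Rt

theorem smul_eq_of_two_fixed (hrel : ∀ t, (d - 1) • x t + x (f t) = L)
    (htu : t ≠ u) (htv : t ≠ v) (huv : u ≠ v) (ht : f t = t) (hu : f u = u) (hv : f v = t)
    (i j : Fin 3) : ((d - 1) * d) • x i = ((d - 1) * d) • x j := by
  have Rt := hrel t
  have Ru := hrel u
  have Rv := hrel v
  rw [ht] at Rt; rw [hu] at Ru; rw [hv] at Rv
  refine smul_eq_of_distinct htu htv huv ?_ ?_ i j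
  · linear_combination (norm := module) (d - 1) • Ru - (d - 1) • Rt
  · linear_combination (norm := module) d • Rv - d • Rt

theorem smul_eq_of_chain (hrel : ∀ t, (d - 1) • x t + x (f t) = L)
    (htu : t ≠ u) (htv : t ≠ v) (huv : u ≠ v) (ht : f t = t) (hu : f u = t) (hv : f v = u)
    (i j : Fin 3) : ((d - 1) ^ 2) • x i = ((d - 1) ^ 2) • x j := by
  have Rt := hrel t
  have Ru := hrel u
  have Rv := hrel v
  rw [ht] at Rt; rw [hu] at Ru; rw [hv] at Rv
  refine smul_eq_of_distinct htu htv huv ?_ ?_ i j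
  · linear_combination (norm := module) (d - 1) • Ru - (d - 1) • Rt
  · linear_combination (norm := module) (d - 1) • Rv - Ru - (d - 2) • Rt

theorem smul_eq_of_two_cycle_tail (hrel : ∀ t, (d - 1) • x t + x (f t) = L)
    (htu : t ≠ u) (htv : t ≠ v) (huv : u ≠ v) (ht : f t = u) (hu : f u = t) (hv : f v = t)
    (i j : Fin 3) : ((d - 1) * (d - 2)) • x i = ((d - 1) * (d - 2)) • x j := by
  have Rt := hrel t
  have Ru := hrel u
  have Rv := hrel v
  rw [ht] at Rt; rw [hu] at Ru; rw [hv] at Rv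
  refine smul_eq_of_distinct htu htv huv ?_ ?_ i j
  · linear_combination (norm := module) (d - 1) • Ru - (d - 1) • Rt
  · linear_combination (norm := module) (d - 2) • Rv + Ru - (d - 1) • Rt

end Relations

theorem Int.not_mul_dvd_of_eq_mul_add {ℓ d c k r : ℤ} (hr : r ≠ 0) (hrd : |r| < d)
    (hc : c = d * k + r) : ¬ ℓ * d ∣ c := by
  intro h
  have hdr : d ∣ r := (dvd_add_right (dvd_mul_right d k)).mp (hc ▸ (dvd_mul_left d ℓ).trans h)
  exact hr (Int.eq_zero_of_abs_lt_dvd hdr hrd)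

theorem dvd_sub_one_or_dvd_sub_two_of_relations {M : Type*} [AddCommGroup M] {d ℓ : ℕ}
    (hd : 4 ≤ d) (hℓ : 2 ≤ ℓ) (x : Fin 3 → M) (L : M) (f : Fin 3 → Fin 3)
    (hrel : ∀ t, (d - 1) • x t + x (f t) = L)
    (hgen : ∀ m : ℕ, (∀ i j, m • x i = m • x j) → ℓ * d ∣ m) :
    ℓ ∣ d - 1 ∨ ℓ ∣ d - 2 := by
  have hrel' : ∀ t, ((d : ℤ) - 1) • x t + x (f t) = L := fun t => by
    rw [← hrel t, ← natCast_zsmul, Nat.cast_sub (by omega), Nat.cast_one]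
  have hgen' : ∀ c : ℤ, (∀ i j, c • x i = c • x j) → (ℓ : ℤ) * d ∣ c := fun c hc => by
    refine Int.natCast_dvd.mpr (hgen c.natAbs fun i j => ?_)
    rw [← sub_eq_zero, ← smul_sub, natAbs_nsmul_eq_zero, smul_sub, hc i j, sub_self]
  have hd0 : (d : ℤ) ≠ 0 := by omega
  suffices (ℓ : ℤ) ∣ d - 1 ∨ (ℓ : ℤ) ∣ d - 2 by
    rw [← Int.natCast_dvd_natCast, ← Int.natCast_dvd_natCast, Nat.cast_sub (by omega),
      Nat.cast_sub (by omega)]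
    exact_mod_cast this
  rcases selfMap_fin_three_cases f with hf | ⟨s, hf⟩ |
    ⟨t, u, v, htu, htv, huv, ⟨ht, hu, hv⟩ | ⟨ht, hu, hv⟩ | ⟨ht, hu, hv⟩ | ⟨ht, hu, hv⟩ | ⟨ht, hu, hv⟩⟩
  · have h1 : (ℓ : ℤ) ∣ 1 := (mul_dvd_mul_iff_right hd0).mp
      ((one_mul (d : ℤ)).symm ▸ hgen' _ (smul_eq_of_forall_map_eq_self hrel' hf))
    have := Int.le_of_dvd one_pos h1
    omega
  · exact absurd (hgen' _ (smul_eq_of_forall_map_eq hrel' s hf))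
      (Int.not_mul_dvd_of_eq_mul_add (k := 1) (r := -1) (by norm_num) (by simp; omega) (by ring))
  · exact Or.inr ((mul_dvd_mul_iff_right hd0).mp
      (hgen' _ (smul_eq_of_transposition hrel' htu htv huv ht hu hv)))
  · exact absurd (hgen' _ (smul_eq_of_three_cycle hrel' htu htv huv ht hu hv))
      (Int.not_mul_dvd_of_eq_mul_add (k := d - 3) (r := 3) (by norm_num) (by simp; omega)
        (by ring))
  · exact Or.inl ((mul_dvd_mul_iff_right hd0).mp
      (hgen' _ (smul_eq_of_two_fixed hrel' htu htv huv ht hu hv)))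
  · exact absurd (hgen' _ (smul_eq_of_chain hrel' htu htv huv ht hu hv))
      (Int.not_mul_dvd_of_eq_mul_add (k := d - 2) (r := 1) (by norm_num) (by simp; omega)
        (by ring))
  · exact absurd (hgen' _ (smul_eq_of_two_cycle_tail hrel' htu htv huv ht hu hv))
      (Int.not_mul_dvd_of_eq_mul_add (k := d - 3) (r := 2) (by norm_num) (by simp; omega)
        (by ring))

theorem stmt9_general {K : Type*} [Field K] [IsAlgClosed K] [CharZero K]
    (d : ℕ) (hd : 5 ≤ d) (F : MvPolynomial (Fin 3) K)
    (hhom : F.IsHomogeneous d) (hns : IsNonsingular F)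
    (ℓ : ℕ) (hℓ1 : 2 ≤ ℓ)
    (h : ∃ g ∈ projAut F, orderOf g = ℓ * d) :
    ℓ ∣ d - 1 ∨ ℓ ∣ d - 2 := by
  obtain ⟨_, ⟨A, ⟨c, hA⟩, rfl⟩, hord⟩ := h
  obtain ⟨c₀, hc₀, hAn⟩ := exists_pow_eq_scalar_of_mk_pow_eq_one (hord ▸ pow_orderOf_eq_one _)
  obtain ⟨b, ν, hb⟩ := exists_basis_mulVec_eq_smul_of_pow_eq_scalar
    (Nat.cast_ne_zero.mpr (by positivity)) hc₀ hAn
  choose f hf using exists_pow_mul_eq_of_substPoly_eq_smul hhom hns hA hb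
  have hν : ∀ t, ν t ≠ 0 := fun t =>
    ne_zero_pow (by omega) (left_ne_zero_of_mul (hf t ▸ c.ne_zero))
  let x : Fin 3 → Additive Kˣ := fun t => Additive.ofMul (Units.mk0 (ν t) (hν t))
  refine dvd_sub_one_or_dvd_sub_two_of_relations (by omega) hℓ1 x (Additive.ofMul c) f
    (fun t => ?_) (fun m hm => ?_)
  · rw [← ofMul_pow, ← ofMul_mul]
    exact congrArg Additive.ofMul (Units.ext (by simp [hf t]))
  · rw [← hord]
    refine orderOf_dvd_of_pow_eq_one (mk_pow_eq_one_of_forall_pow_eq hb (c := ν 0 ^ m) fun t => ?_)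
    simpa [x, ← ofMul_pow, Units.ext_iff] using hm t 0

/-- if a nonsingular plane curve of degree `d ≥ 5` has an automorphism of
order `ℓ·d` with `2 ≤ ℓ ≤ d-1`, then `ℓ ∣ d-1` or `ℓ ∣ d-2`. -/
theorem stmt9 {K : Type*} [Field K] [IsAlgClosed K] [CharZero K]
    (d : ℕ) (hd : 5 ≤ d) (F : MvPolynomial (Fin 3) K)
    (hhom : F.IsHomogeneous d) (hns : IsNonsingular F)
    (ℓ : ℕ) (hℓ1 : 2 ≤ ℓ) (hℓ2 : ℓ ≤ d - 1)
    (h : ∃ g ∈ projAut F, orderOf g = ℓ * d) :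
    ℓ ∣ d - 1 ∨ ℓ ∣ d - 2 :=
  stmt9_general d hd F hhom hns ℓ hℓ1 h

end
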